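/- Suppose φ, ψ : 𝓕 → 𝓔 are additive mappings such that ⟨φ(z), ψ(w)⟩ = 0 and a·⟨φ(z), φ(w)⟩·a* = (1−a)·⟨ψ(z), ψ(w)⟩·(1−a)* for all z, w ∈ 𝓕. If f : 𝓔 → 𝓖 is an odd orthogonally a-Jensen mapping (f(−x) = −f(x) for all x), then f(φ(x) + φ(y)) = f(φ(x)) + f(φ(y)) and f(ψ(x) + ψ(y)) = f(ψ(x)) + f(ψ(y)) for all x, y ∈ 𝓕; that is, f is additive on φ(𝓕) and on ψ(𝓕). -/

import Mathlib

open scoped RightActions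

/-- The `CStarModule` class of the older Mathlib (right `A`-modules, i.e. `SMul Aᵐᵒᵖ E`,
with the inner product `A`-linear on the right), which the current Mathlib has replaced by
left modules. -/
class CStarModule' (A E : Type*) [NonUnitalSemiring A] [StarRing A] [Module ℂ A]
    [AddCommGroup E] [Module ℂ E] [PartialOrder A] [SMul Aᵐᵒᵖ E] [Norm A] [Norm E]
    extends Inner A E where
  inner_add_right {x} {y} {z} : inner x (y + z) = inner x y + inner x z
  inner_self_nonneg {x} : 0 ≤ inner x x
  inner_self {x} : inner x x = 0 ↔ x = 0
  inner_op_smul_right {a : A} {x y : E} : inner x (y <• a) = inner x y * a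
  inner_smul_right_complex {z : ℂ} {x} {y} : inner x (z • y) = z • inner x y
  star_inner x y : star (inner x y) = inner y x
  norm_eq_sqrt_norm_inner_self x : ‖x‖ = √‖inner x x‖

variable {A : Type*} [CStarAlgebra A] [PartialOrder A] [StarOrderedRing A]
variable {E : Type*} [NormedAddCommGroup E] [Module ℂ E] [Module Aᵐᵒᵖ E] [CStarModule' A E]
variable {F : Type*} [NormedAddCommGroup F] [Module ℂ F] [Module Aᵐᵒᵖ F] [CStarModule' A F]
variable {G : Type*} [NormedAddCommGroup G] [Module ℂ G] [Module Aᵐᵒᵖ G] [CStarModule' A G]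

/-- A mapping `f : E → G` between inner product `A`-modules is *orthogonally `a`-Jensen* if
`⟪x, y⟫ = 0` implies `f (a·x + (1-a)·y) = a·f x + (1-a)·f y` (module actions written as right
actions `<•`, since `E`, `G` are right `A`-modules). -/
def OrthAJensen (a : A) (f : E → G) : Prop :=
  ∀ x y : E, inner (𝕜 := A) x y = 0 →
    f (x <• a + y <• (1 - a)) = f x <• a + f y <• (1 - a)

/-!
An orthogonally `a`-Jensen map vanishing at `0` is orthogonally additive: write orthogonal
`x, y` as `(x <• ⅟a) <• a` and `(y <• ⅟(1 - a)) <• (1 - a)`, and note that the Jensen equation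
with one argument `0` lets `f` commute with `<• a` and `<• (1 - a)`.

With `uᵢ = φ xᵢ` and `vᵢ = ψ xᵢ <• star (⅟a * (1 - a))`, `heq` becomes `⟪u₁, u₂⟫ = ⟪v₁, v₂⟫`,
while each `vᵢ` stays orthogonal to both `uⱼ`. Then `u₁ + u₂ ⊥ v₁ - v₂`,
`u₁ + v₁ ⊥ u₂ - v₂` and `u₂ + v₂ ⊥ u₁ - v₁`, so orthogonal additivity and oddness give
`f (u₁ + u₂) ± f (v₁ - v₂) = f u₁ + f u₂ ± (f v₁ - f v₂)`; adding the two equations and halving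
yields `f (u₁ + u₂) = f u₁ + f u₂`. The roles of `φ` and `ψ` are symmetric.
-/

namespace CStarModule'

section NonUnital

variable {R M N : Type*} [NonUnitalRing R] [StarRing R] [Module ℂ R] [PartialOrder R] [Norm R]
  [AddCommGroup M] [Module ℂ M] [SMul Rᵐᵒᵖ M] [Norm M] [CStarModule' R M]

@[simp]
theorem inner_zero_right (x : M) : inner (𝕜 := R) x 0 = 0 := by
  have h := inner_add_right (A := R) (x := x) (y := (0 : M)) (z := 0)
  rwa [add_zero, left_eq_add] at h

@[simp]
theorem inner_zero_left (x : M) : inner (𝕜 := R) 0 x = 0 := by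
  rw [← star_inner, inner_zero_right, star_zero]

theorem inner_eq_zero_comm {x y : M} : inner (𝕜 := R) x y = 0 ↔ inner (𝕜 := R) y x = 0 := by
  rw [← star_inner x y, star_eq_zero]

theorem inner_add_left (x y z : M) :
    inner (𝕜 := R) (x + y) z = inner (𝕜 := R) x z + inner (𝕜 := R) y z := by
  rw [← star_inner, inner_add_right, star_add, star_inner, star_inner]

theorem inner_neg_right (x y : M) : inner (𝕜 := R) x (-y) = -inner (𝕜 := R) x y :=
  eq_neg_of_add_eq_zero_left <| by rw [← inner_add_right, neg_add_cancel, inner_zero_right]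

theorem inner_sub_right (x y z : M) :
    inner (𝕜 := R) x (y - z) = inner (𝕜 := R) x y - inner (𝕜 := R) x z := by
  rw [sub_eq_add_neg, inner_add_right, inner_neg_right, ← sub_eq_add_neg]

theorem inner_op_smul_left (c : R) (x y : M) :
    inner (𝕜 := R) (x <• c) y = star c * inner (𝕜 := R) x y := by
  rw [← star_inner, inner_op_smul_right, star_mul, star_inner]

theorem inner_op_smul_star_op_smul_star (c : R) (x y : M) :
    inner (𝕜 := R) (x <• star c) (y <• star c) = c * inner (𝕜 := R) x y * star c := by
  rw [inner_op_smul_left, inner_op_smul_right, star_star, mul_assoc]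

variable (R) in
def OrthAdditive [Add N] (f : M → N) : Prop :=
  ∀ x y : M, inner (𝕜 := R) x y = 0 → f (x + y) = f x + f y

variable [AddCommGroup N] {f : M → N}

theorem OrthAdditive.map_sub (hf : OrthAdditive R f) (hodd : f.Odd) {x y : M}
    (hxy : inner (𝕜 := R) x y = 0) : f (x - y) = f x - f y := by
  rw [sub_eq_add_neg, hf _ _ (by rw [inner_neg_right, hxy, neg_zero]), hodd,
    ← sub_eq_add_neg]

theorem OrthAdditive.map_add_of_inner_eq [IsAddTorsionFree N] (hf : OrthAdditive R f)
    (hodd : f.Odd) {u₁ u₂ v₁ v₂ : M}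
    (h₁₁ : inner (𝕜 := R) u₁ v₁ = 0) (h₁₂ : inner (𝕜 := R) u₁ v₂ = 0)
    (h₂₁ : inner (𝕜 := R) u₂ v₁ = 0) (h₂₂ : inner (𝕜 := R) u₂ v₂ = 0)
    (h : inner (𝕜 := R) u₁ u₂ = inner (𝕜 := R) v₁ v₂) :
    f (u₁ + u₂) = f u₁ + f u₂ := by
  have h' : inner (𝕜 := R) u₂ u₁ = inner (𝕜 := R) v₂ v₁ := by
    rw [← star_inner u₁, ← star_inner v₁, h]
  have hsd : inner (𝕜 := R) (u₁ + u₂) (v₁ - v₂) = 0 := by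
    simp only [inner_add_left, inner_sub_right, h₁₁, h₁₂, h₂₁, h₂₂, sub_zero, add_zero]
  have hplus : f (u₁ + u₂) + f (v₁ - v₂) = f u₁ + f v₁ + (f u₂ - f v₂) :=
    calc f (u₁ + u₂) + f (v₁ - v₂) = f ((u₁ + v₁) + (u₂ - v₂)) := by
          rw [← hf _ _ hsd]; congr 1; abel
      _ = f u₁ + f v₁ + (f u₂ - f v₂) := by
          rw [hf _ _ (by simp [inner_add_left, inner_sub_right, h, h₁₂,
            inner_eq_zero_comm.mp h₂₁]), hf _ _ h₁₁, hf.map_sub hodd h₂₂]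
  have hminus : f (u₁ + u₂) - f (v₁ - v₂) = f u₂ + f v₂ + (f u₁ - f v₁) :=
    calc f (u₁ + u₂) - f (v₁ - v₂) = f ((u₂ + v₂) + (u₁ - v₁)) := by
          rw [← hf.map_sub hodd hsd]; congr 1; abel
      _ = f u₂ + f v₂ + (f u₁ - f v₁) := by
          rw [hf _ _ (by simp [inner_add_left, inner_sub_right, h', h₂₁,
            inner_eq_zero_comm.mp h₁₂]), hf _ _ h₂₂, hf.map_sub hodd h₁₁]
  refine nsmul_right_injective two_ne_zero ?_
  calc 2 • f (u₁ + u₂) = (f (u₁ + u₂) + f (v₁ - v₂)) + (f (u₁ + u₂) - f (v₁ - v₂)) := by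
        abel
    _ = 2 • (f u₁ + f u₂) := by rw [hplus, hminus]; abel

end NonUnital

section Unital

variable {R M N : Type*} [Ring R] [StarRing R] [Module ℂ R] [PartialOrder R] [Norm R]
  [AddCommGroup M] [Module ℂ M] [SMul Rᵐᵒᵖ M] [Norm M] [CStarModule' R M]

theorem inner_op_smul_star_invOf_mul_eq {b c : R} [Invertible b] {u₁ u₂ v₁ v₂ : M}
    (h : b * inner (𝕜 := R) u₁ u₂ * star b = c * inner (𝕜 := R) v₁ v₂ * star c) :
    inner (𝕜 := R) (v₁ <• star (⅟b * c)) (v₂ <• star (⅟b * c)) = inner (𝕜 := R) u₁ u₂ := by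
  rw [inner_op_smul_star_op_smul_star]
  calc ⅟b * c * inner (𝕜 := R) v₁ v₂ * star (⅟b * c)
      = ⅟b * (c * inner (𝕜 := R) v₁ v₂ * star c) * star (⅟b) := by
        rw [star_mul]; simp only [mul_assoc]
    _ = ⅟b * b * inner (𝕜 := R) u₁ u₂ * (star b * star (⅟b)) := by
        rw [← h]; simp only [mul_assoc]
    _ = inner (𝕜 := R) u₁ u₂ := by
        rw [← star_mul, invOf_mul_self, star_one, one_mul, mul_one]

theorem OrthAdditive.map_add_of_conj_inner_eq [AddCommGroup N] [IsAddTorsionFree N]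
    {f : M → N} (hf : OrthAdditive R f) (hodd : f.Odd) {b c : R} [Invertible b]
    {u₁ u₂ v₁ v₂ : M}
    (h₁₁ : inner (𝕜 := R) u₁ v₁ = 0) (h₁₂ : inner (𝕜 := R) u₁ v₂ = 0)
    (h₂₁ : inner (𝕜 := R) u₂ v₁ = 0) (h₂₂ : inner (𝕜 := R) u₂ v₂ = 0)
    (h : b * inner (𝕜 := R) u₁ u₂ * star b = c * inner (𝕜 := R) v₁ v₂ * star c) :
    f (u₁ + u₂) = f u₁ + f u₂ := by
  have horth {u v : M} (huv : inner (𝕜 := R) u v = 0) :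
      inner (𝕜 := R) u (v <• star (⅟b * c)) = 0 := by
    rw [inner_op_smul_right, huv, zero_mul]
  exact hf.map_add_of_inner_eq hodd (horth h₁₁) (horth h₁₂) (horth h₂₁) (horth h₂₂)
    (inner_op_smul_star_invOf_mul_eq h).symm

end Unital

end CStarModule'

theorem OrthAJensen.orthAdditive {R M N : Type*} [CStarAlgebra R] [PartialOrder R]
    [NormedAddCommGroup M] [Module ℂ M] [Module Rᵐᵒᵖ M] [CStarModule' R M]
    [NormedAddCommGroup N] [Module Rᵐᵒᵖ N] {a : R} [Invertible a] [Invertible (1 - a)]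
    {f : M → N} (hf : OrthAJensen a f) (h₀ : f 0 = 0) :
    CStarModule'.OrthAdditive R f := by
  have hfa (x : M) : f (x <• a) = f x <• a := by
    simpa [h₀] using hf x 0 (CStarModule'.inner_zero_right x)
  have hfa' (y : M) : f (y <• (1 - a)) = f y <• (1 - a) := by
    simpa [h₀] using hf 0 y (CStarModule'.inner_zero_left y)
  have hcancel {b : R} [Invertible b] (x : M) : x <• ⅟b <• b = x := by
    rw [op_smul_op_smul, invOf_mul_self, MulOpposite.op_one, one_smul]
  intro x y hxy
  have := hf (x <• ⅟a) (y <• ⅟(1 - a)) (by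
    rw [CStarModule'.inner_op_smul_left, CStarModule'.inner_op_smul_right, hxy, zero_mul,
      mul_zero])
  rwa [hcancel, hcancel, ← hfa, ← hfa', hcancel, hcancel] at this

theorem odd_additive_on_ranges_general (a : A) [Invertible a] [Invertible (1 - a)] (φ ψ : F → E)
    (horth : ∀ z w : F, inner (𝕜 := A) (φ z) (ψ w) = 0)
    (heq : ∀ z w : F,
      a * inner (𝕜 := A) (φ z) (φ w) * star a
        = (1 - a) * inner (𝕜 := A) (ψ z) (ψ w) * star (1 - a))
    (f : E → G) (hf : OrthAJensen a f) (hodd : ∀ x : E, f (-x) = -f x) :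
    ∀ x y : F,
      f (φ x + φ y) = f (φ x) + f (φ y) ∧ f (ψ x + ψ y) = f (ψ x) + f (ψ y) := by
  have : IsAddTorsionFree G := .of_isTorsionFree ℂ G
  have hadd : CStarModule'.OrthAdditive A f := hf.orthAdditive (Function.Odd.map_zero hodd)
  have hψφ (z w : F) : inner (𝕜 := A) (ψ z) (φ w) = 0 :=
    CStarModule'.inner_eq_zero_comm.mp (horth w z)
  intro x y
  exact ⟨hadd.map_add_of_conj_inner_eq hodd (horth x x) (horth x y) (horth y x) (horth y y)
      (heq x y),
    hadd.map_add_of_conj_inner_eq hodd (hψφ x x) (hψφ x y) (hψφ y x) (hψφ y y) (heq x y).symm⟩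

/-- First part of Proposition 2.4: an odd orthogonally `a`-Jensen mapping is additive
on `φ(F)` and on `ψ(F)`. -/
theorem odd_additive_on_ranges (a : A) [Invertible a] [Invertible (1 - a)] (φ ψ : F → E)
    (hφ : ∀ z w : F, φ (z + w) = φ z + φ w)
    (hψ : ∀ z w : F, ψ (z + w) = ψ z + ψ w)
    (horth : ∀ z w : F, inner (𝕜 := A) (φ z) (ψ w) = 0)
    (heq : ∀ z w : F,
      a * inner (𝕜 := A) (φ z) (φ w) * star a
        = (1 - a) * inner (𝕜 := A) (ψ z) (ψ w) * star (1 - a))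
    (f : E → G) (hf : OrthAJensen a f) (hodd : ∀ x : E, f (-x) = -f x) :
    ∀ x y : F,
      f (φ x + φ y) = f (φ x) + f (φ y) ∧ f (ψ x + ψ y) = f (ψ x) + f (ψ y) :=
  odd_additive_on_ranges_general a φ ψ horth heq f hf hodd
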